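/- Consider an imprecise Markov chain with initial model E_1 and lower transition operator T; assume T is Perron–Frobenius-like with stationary lower expectation E_∞, let r be the smallest natural number with ρ := ρ(T^r) < 1, and for f : 𝒳 → ℝ define the average-gain process A^f by A^f(□) := 0 and A^f(x_{1:n}) := (1/n)[(f(x_1) − E_1(f)) + ∑_{k=2}^{n} (f(x_k) − Tf(x_{k−1}))]. Then for every f : 𝒳 → ℝ: (i) |A^{T^ℓ f}(x_{1:n})| ≤ ‖f‖_v · ρ^{⌊ℓ/r⌋} for all ℓ ∈ ℕ ∪ {0}, all n ∈ ℕ and all x_{1:n} ∈ 𝒳^n; (ii) for every path ω ∈ Ω, lim_{n→∞} (1/n) ∑_{k=1}^{n} (T^n f)(ω_k) = E_∞(f); (iii) for every path ω ∈ Ω, lim_{n→∞} (1/n) ∑_{ℓ=1}^{n} (T^ℓ f)(ω_n) = E_∞(f); (iv) lim_{n→∞} (1/n) ∑_{k=1}^{n} E_1(T^{k−1} f) = E_∞(f). -/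

import Mathlib

open Filter Topology

namespace IP

/-- A situation of length `n`: a tuple of the first `n` states. -/
abbrev Sit (𝒳 : ℕ → Type) (n : ℕ) := (i : Fin n) → 𝒳 i

/-- A path: an infinite sequence of states. -/
abbrev Path (𝒳 : ℕ → Type) := (i : ℕ) → 𝒳 i

/-- The initial segment `ω^n` of a path. -/
def res {𝒳 : ℕ → Type} (ω : Path 𝒳) (n : ℕ) : Sit 𝒳 n := fun i => ω i

/-- The initial (empty) situation `□`. -/
def emptySit {𝒳 : ℕ → Type} : Sit 𝒳 0 := fun i => i.elim0

/-- Append a next state to a situation. -/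
def snoc {𝒳 : ℕ → Type} {n : ℕ} (s : Sit 𝒳 n) (x : 𝒳 n) : Sit 𝒳 (n + 1) := fun i =>
  if h : (i : ℕ) < n then s ⟨i, h⟩
  else cast (congrArg 𝒳 (Nat.le_antisymm (Nat.le_of_not_lt h) (Nat.lt_succ_iff.mp i.isLt))) x

/-- Truncate a situation of length `n` to its first `k` states. -/
def trunc {𝒳 : ℕ → Type} {n : ℕ} (s : Sit 𝒳 n) (k : ℕ) (h : k ≤ n) : Sit 𝒳 k :=
  fun i => s ⟨i, lt_of_lt_of_le i.isLt h⟩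

/-- A (coherent) lower expectation on a nonempty finite set. -/
def IsLE {Y : Type} [Fintype Y] [Nonempty Y] (E : (Y → ℝ) → ℝ) : Prop :=
  (∀ f : Y → ℝ, (⨅ y, f y) ≤ E f) ∧
  (∀ f g : Y → ℝ, E f + E g ≤ E (fun y => f y + g y)) ∧
  (∀ (f : Y → ℝ) (c : ℝ), 0 ≤ c → E (fun y => c * f y) = c * E f)

/-- Submartingale w.r.t. the local models `Q` of an imprecise probability tree. -/
def IsSubmartingale {𝒳 : ℕ → Type} (Q : ∀ n, Sit 𝒳 n → (𝒳 n → ℝ) → ℝ)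
    (F : ∀ n, Sit 𝒳 n → ℝ) : Prop :=
  ∀ (n : ℕ) (s : Sit 𝒳 n), 0 ≤ Q n s (fun x => F (n + 1) (snoc s x) - F n s)

/-- Supermartingale: `-F` is a submartingale. -/
def IsSupermartingale {𝒳 : ℕ → Type} (Q : ∀ n, Sit 𝒳 n → (𝒳 n → ℝ) → ℝ)
    (F : ∀ n, Sit 𝒳 n → ℝ) : Prop :=
  IsSubmartingale Q (fun n s => -F n s)

/-- A test supermartingale: nonnegative, starting at 1. -/
def IsTestSupermartingale {𝒳 : ℕ → Type} (Q : ∀ n, Sit 𝒳 n → (𝒳 n → ℝ) → ℝ)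
    (F : ∀ n, Sit 𝒳 n → ℝ) : Prop :=
  IsSupermartingale Q F ∧ (∀ n s, 0 ≤ F n s) ∧ F 0 emptySit = 1

/-- An event is strictly null if some test supermartingale converges to `+∞` on it. -/
def StrictlyNull {𝒳 : ℕ → Type} (Q : ∀ n, Sit 𝒳 n → (𝒳 n → ℝ) → ℝ)
    (A : Set (Path 𝒳)) : Prop :=
  ∃ F : ∀ n, Sit 𝒳 n → ℝ, IsTestSupermartingale Q F ∧
    ∀ ω ∈ A, Tendsto (fun n => F n (res ω n)) atTop atTop

/-- `limsup_n F(ω^n)` as an extended real. -/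
noncomputable def pathLimsup {𝒳 : ℕ → Type} (F : ∀ n, Sit 𝒳 n → ℝ) (ω : Path 𝒳) : EReal :=
  Filter.limsup (fun n => (F n (res ω n) : EReal)) atTop

/-- `liminf_n F(ω^n)` as an extended real. -/
noncomputable def pathLiminf {𝒳 : ℕ → Type} (F : ∀ n, Sit 𝒳 n → ℝ) (ω : Path 𝒳) : EReal :=
  Filter.liminf (fun n => (F n (res ω n) : EReal)) atTop

/-- A real process bounded above. -/
def BddAbv {𝒳 : ℕ → Type} (F : ∀ n, Sit 𝒳 n → ℝ) : Prop := ∃ B : ℝ, ∀ n s, F n s ≤ B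

/-- A real process bounded below. -/
def BddBlw {𝒳 : ℕ → Type} (F : ∀ n, Sit 𝒳 n → ℝ) : Prop := ∃ B : ℝ, ∀ n s, B ≤ F n s

/-- Conditional global lower expectation `E(f|s)` of an extended real variable. -/
noncomputable def lexp {𝒳 : ℕ → Type} (Q : ∀ n, Sit 𝒳 n → (𝒳 n → ℝ) → ℝ) {n : ℕ}
    (s : Sit 𝒳 n) (f : Path 𝒳 → EReal) : EReal :=
  sSup ((fun F : ∀ k, Sit 𝒳 k → ℝ => (F n s : EReal)) ''
    {F : ∀ k, Sit 𝒳 k → ℝ | IsSubmartingale Q F ∧ BddAbv F ∧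
      ∀ ω : Path 𝒳, res ω n = s → pathLimsup F ω ≤ f ω})

/-- Conditional global upper expectation `Ē(f|s)`. -/
noncomputable def uexp {𝒳 : ℕ → Type} (Q : ∀ n, Sit 𝒳 n → (𝒳 n → ℝ) → ℝ) {n : ℕ}
    (s : Sit 𝒳 n) (f : Path 𝒳 → EReal) : EReal :=
  - lexp Q s (fun ω => - f ω)

/-- The local models of a (time-homogeneous) imprecise Markov chain with initial model `E1`
and transition models `QT`. -/
def markovQ {X : Type} (E1 : (X → ℝ) → ℝ) (QT : X → (X → ℝ) → ℝ) :
    ∀ n, Sit (fun _ => X) n → (X → ℝ) → ℝ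
  | 0, _ => E1
  | n + 1, s => QT (s ⟨n, Nat.lt_succ_self n⟩)

/-- Prefix a path with a situation (fixed state space). -/
def prependX {X : Type} {n : ℕ} (s : Sit (fun _ => X) n) (ω : ℕ → X) : ℕ → X :=
  fun i => if h : i < n then s ⟨i, h⟩ else ω (i - n)

/-- Extension of a lower transition operator to extended real maps. -/
noncomputable def Text {X : Type} (T : (X → ℝ) → X → ℝ) (g : X → EReal) : X → EReal :=
  fun x => sSup ((fun h : X → ℝ => (T h x : EReal)) '' {h : X → ℝ | ∀ y, (h y : EReal) ≤ g y})

/-- The variation (semi)norm `max h - min h`. -/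
noncomputable def varnorm {X : Type} [Fintype X] [Nonempty X] (h : X → ℝ) : ℝ :=
  (⨆ x, h x) - ⨅ x, h x

/-- The (weak) coefficient of ergodicity of a lower transition operator. -/
noncomputable def coeff {X : Type} [Fintype X] [Nonempty X] (S : (X → ℝ) → X → ℝ) : ℝ :=
  sSup {v : ℝ | ∃ h : X → ℝ, (∀ x, 0 ≤ h x ∧ h x ≤ 1) ∧ v = varnorm (S h)}

/-- Extend a situation to a path, arbitrarily. -/
noncomputable def extend {𝒳 : ℕ → Type} [∀ k, Nonempty (𝒳 k)] {n : ℕ} (t : Sit 𝒳 n) :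
    Path 𝒳 :=
  fun i => if h : i < n then t ⟨i, h⟩ else Classical.arbitrary (𝒳 i)

/-!
Every increment of the average gain of `g` compares a value of `g` with a lower expectation of
`g`; both lie in `[min g, max g]`, so `|A^g| ≤ ‖g‖_v`. For `g = T^ℓ f` this is at most
`ρ(T^r)^⌊ℓ/r⌋ ‖f‖_v`, since `‖S h‖_v ≤ ρ(S) ‖h‖_v` for every lower transition operator `S`
(rescale `h` affinely into `[0, 1]`) and `T` never increases the variation.

On a finite state space the pointwise convergence `T^n f → E_∞(f)` is uniform, with some
error `d n → 0`. The average in (ii) is then within `d n` of `E_∞(f)`, and those in (iii) and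
(iv) are within a Cesàro mean of `d`.
-/

section LowerExpectation

variable {Y : Type} [Fintype Y] [Nonempty Y] {E : (Y → ℝ) → ℝ}

lemma IsLE.le_iSup (hE : IsLE E) (f : Y → ℝ) : E f ≤ ⨆ y, f y := by
  have hzero : E (fun _ => 0) = 0 := by simpa using hE.2.2 f 0 le_rfl
  have hsum := hE.2.1 f (fun y => -f y)
  have hneg := hE.1 (fun y => -f y)
  have hinf : -(⨆ y, f y) ≤ ⨅ y, -f y :=
    le_ciInf fun y => neg_le_neg (le_ciSup (Finite.bddAbove_range f) y)
  simp only [add_neg_cancel, hzero] at hsum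
  linarith

lemma IsLE.mono (hE : IsLE E) {f g : Y → ℝ} (hfg : ∀ y, f y ≤ g y) : E f ≤ E g := by
  have hsum := hE.2.1 f (fun y => g y - f y)
  have hdiff : 0 ≤ E (fun y => g y - f y) :=
    (le_ciInf fun y => sub_nonneg.2 (hfg y)).trans (hE.1 _)
  simp only [add_sub_cancel] at hsum
  linarith

lemma IsLE.const (hE : IsLE E) (c : ℝ) : E (fun _ => c) = c := by
  have hge := hE.1 (fun _ => c)
  have hle := hE.le_iSup (fun _ => c)
  simp only [ciInf_const, ciSup_const] at hge hle
  linarith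

lemma IsLE.add_const (hE : IsLE E) (f : Y → ℝ) (c : ℝ) :
    E (fun y => f y + c) = E f + c := by
  have hle := hE.2.1 f (fun _ => c)
  have hge := hE.2.1 (fun y => f y + c) (fun _ => -c)
  simp only [add_neg_cancel_right, hE.const] at hle hge
  linarith

lemma IsLE.abs_sub_le {g : Y → ℝ} {c δ : ℝ} (hE : IsLE E) (hg : ∀ y, |g y - c| ≤ δ) :
    |E g - c| ≤ δ := by
  have hsup : (⨆ y, g y) ≤ c + δ := ciSup_le fun y => by linarith [(abs_le.1 (hg y)).2]
  have hinf : c - δ ≤ ⨅ y, g y := le_ciInf fun y => by linarith [(abs_le.1 (hg y)).1]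
  rw [abs_le]
  constructor <;> linarith [hE.1 g, hE.le_iSup g]

lemma IsLE.abs_apply_sub_le_varnorm (hE : IsLE E) (g : Y → ℝ) (y : Y) :
    |g y - E g| ≤ varnorm g := by
  have hinf := ciInf_le (Finite.bddBelow_range g) y
  have hsup := le_ciSup (Finite.bddAbove_range g) y
  rw [varnorm, abs_le]
  constructor <;> linarith [hE.1 g, hE.le_iSup g]

end LowerExpectation

def IsLowerTransition {X : Type} [Fintype X] [Nonempty X] (S : (X → ℝ) → X → ℝ) : Prop :=
  ∀ x, IsLE fun h => S h x

section LowerTransition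

variable {X : Type} [Fintype X] [Nonempty X] {S : (X → ℝ) → X → ℝ}

lemma IsLE.comp {E : (X → ℝ) → ℝ} (hE : IsLE E) (hS : IsLowerTransition S) :
    IsLE fun h => E (S h) := by
  refine ⟨fun f => ?_, fun f g => ?_, fun f c hc => ?_⟩
  · exact (le_ciInf fun x => (hS x).1 f).trans (hE.1 (S f))
  · exact (hE.2.1 (S f) (S g)).trans (hE.mono fun x => (hS x).2.1 f g)
  · have hhom : S (fun y => c * f y) = fun x => c * S f x := funext fun x => (hS x).2.2 f c hc
    simp only [hhom, hE.2.2 (S f) c hc]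

lemma IsLowerTransition.iterate (hS : IsLowerTransition S) (k : ℕ) :
    IsLowerTransition S^[k] := by
  induction k with
  | zero => exact fun x => ⟨fun f => ciInf_le (Finite.bddBelow_range f) x, fun _ _ => le_rfl,
      fun _ _ _ => rfl⟩
  | succ k ih => exact fun x => (ih x).comp hS

lemma varnorm_nonneg (h : X → ℝ) : 0 ≤ varnorm h :=
  sub_nonneg.2 (ciInf_le_ciSup (Finite.bddBelow_range h) (Finite.bddAbove_range h))

lemma varnorm_le_of_forall_mem_Icc {h : X → ℝ} {a b : ℝ} (hab : ∀ x, h x ∈ Set.Icc a b) :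
    varnorm h ≤ b - a :=
  sub_le_sub (ciSup_le fun x => (hab x).2) (le_ciInf fun x => (hab x).1)

lemma varnorm_mul_add_const (u : X → ℝ) {v : ℝ} (hv : 0 ≤ v) (m : ℝ) :
    varnorm (fun x => v * u x + m) = v * varnorm u := by
  rw [varnorm, varnorm, ← ciSup_add (Finite.bddAbove_range _), ← ciInf_add
    (Finite.bddBelow_range _), ← Real.mul_iSup_of_nonneg hv, ← Real.mul_iInf_of_nonneg hv]
  ring

lemma IsLowerTransition.apply_mem_Icc (hS : IsLowerTransition S) (h : X → ℝ) (x : X) :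
    S h x ∈ Set.Icc (⨅ y, h y) (⨆ y, h y) :=
  ⟨(hS x).1 h, (hS x).le_iSup h⟩

lemma IsLowerTransition.varnorm_apply_le (hS : IsLowerTransition S) (h : X → ℝ) :
    varnorm (S h) ≤ varnorm h :=
  varnorm_le_of_forall_mem_Icc (hS.apply_mem_Icc h)

lemma IsLowerTransition.varnorm_apply_le_coeff (hS : IsLowerTransition S) {h : X → ℝ}
    (hh : ∀ x, 0 ≤ h x ∧ h x ≤ 1) : varnorm (S h) ≤ coeff S := by
  have hbdd : BddAbove {v : ℝ | ∃ h : X → ℝ, (∀ x, 0 ≤ h x ∧ h x ≤ 1) ∧ v = varnorm (S h)} := by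
    refine ⟨1, ?_⟩
    rintro _ ⟨h, hh, rfl⟩
    simpa using (hS.varnorm_apply_le h).trans (varnorm_le_of_forall_mem_Icc hh)
  exact le_csSup hbdd ⟨h, hh, rfl⟩

lemma IsLowerTransition.coeff_nonneg (hS : IsLowerTransition S) : 0 ≤ coeff S :=
  (varnorm_nonneg _).trans (hS.varnorm_apply_le_coeff (h := 0) fun _ => ⟨le_rfl, zero_le_one⟩)

lemma IsLowerTransition.varnorm_apply_le_coeff_mul (hS : IsLowerTransition S) (h : X → ℝ) :
    varnorm (S h) ≤ coeff S * varnorm h := by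
  rcases (varnorm_nonneg h).eq_or_lt with hv | hv
  · simpa [← hv] using hS.varnorm_apply_le h
  set v := varnorm h
  set m := ⨅ y, h y
  -- `h = v * g + m` with `0 ≤ g ≤ 1`, and `S` commutes with this affine map
  set g : X → ℝ := fun y => (h y - m) / v
  have hg : ∀ y, 0 ≤ g y ∧ g y ≤ 1 := fun y =>
    ⟨div_nonneg (sub_nonneg.2 (ciInf_le (Finite.bddBelow_range h) y)) hv.le,
      (div_le_one hv).2 <| by
        linarith [le_ciSup (Finite.bddAbove_range h) y, show v = (⨆ y, h y) - m from rfl]⟩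
  have hSh : S h = fun x => v * S g x + m := funext fun x => by
    have hh : h = fun y => v * g y + m := funext fun y => by
      simp only [g]; field_simp; ring
    have hadd := (hS x).add_const (fun y => v * g y) m
    have hhom := (hS x).2.2 g v hv.le
    simp only at hadd hhom
    rw [hh, hadd, hhom]
  rw [hSh, varnorm_mul_add_const _ hv.le, mul_comm]
  exact mul_le_mul_of_nonneg_right (hS.varnorm_apply_le_coeff hg) hv.le

lemma IsLowerTransition.varnorm_iterate_le (hS : IsLowerTransition S) (q : ℕ) (h : X → ℝ) :
    varnorm (S^[q] h) ≤ coeff S ^ q * varnorm h := by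
  induction q generalizing h with
  | zero => simp
  | succ q ih =>
    calc varnorm (S^[q] (S h)) ≤ coeff S ^ q * varnorm (S h) := ih (S h)
      _ ≤ coeff S ^ q * (coeff S * varnorm h) :=
        mul_le_mul_of_nonneg_left (hS.varnorm_apply_le_coeff_mul h)
          (pow_nonneg hS.coeff_nonneg q)
      _ = coeff S ^ (q + 1) * varnorm h := by ring

lemma IsLowerTransition.varnorm_iterate_le_coeff_pow_div (hS : IsLowerTransition S) (r l : ℕ)
    (f : X → ℝ) : varnorm (S^[l] f) ≤ varnorm f * coeff (S^[r]) ^ (l / r) := by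
  have hsplit : S^[l] f = (S^[r])^[l / r] (S^[l % r] f) := by
    conv_lhs => rw [← Nat.div_add_mod l r]
    rw [Function.iterate_add_apply, Function.iterate_mul]
  rw [hsplit, mul_comm]
  exact ((hS.iterate r).varnorm_iterate_le _ _).trans (mul_le_mul_of_nonneg_left
    ((hS.iterate _).varnorm_apply_le f) (pow_nonneg (hS.iterate r).coeff_nonneg _))

end LowerTransition

section Averages

open Finset

lemma abs_inv_mul_sum_sub_le {ι : Type*} {s : Finset ι} {n : ℕ} (hs : #s = n) (hn : n ≠ 0)
    {a e : ι → ℝ} {L : ℝ} (h : ∀ i ∈ s, |a i - L| ≤ e i) :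
    |(n : ℝ)⁻¹ * ∑ i ∈ s, a i - L| ≤ (n : ℝ)⁻¹ * ∑ i ∈ s, e i := by
  subst hs
  have hcard : (#s : ℝ) ≠ 0 := Nat.cast_ne_zero.2 hn
  have hcenter : (#s : ℝ)⁻¹ * ∑ i ∈ s, a i - L = (#s : ℝ)⁻¹ * ∑ i ∈ s, (a i - L) := by
    rw [sum_sub_distrib, sum_const, nsmul_eq_mul]
    field_simp
  rw [hcenter, abs_mul, abs_inv, Nat.abs_cast]
  exact mul_le_mul_of_nonneg_left ((abs_sum_le_sum_abs _ _).trans (sum_le_sum h)) (by positivity)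

lemma abs_inv_mul_sum_sub_le_of_le {ι : Type*} {s : Finset ι} {n : ℕ} (hs : #s = n) (hn : n ≠ 0)
    {a : ι → ℝ} {L c : ℝ} (h : ∀ i ∈ s, |a i - L| ≤ c) :
    |(n : ℝ)⁻¹ * ∑ i ∈ s, a i - L| ≤ c := by
  have hcard : (n : ℝ) ≠ 0 := Nat.cast_ne_zero.2 hn
  calc _ ≤ (n : ℝ)⁻¹ * ∑ _i ∈ s, c := abs_inv_mul_sum_sub_le hs hn h
    _ = c := by rw [sum_const, hs, nsmul_eq_mul, inv_mul_cancel_left₀ hcard]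

variable {X : Type} [Fintype X] {g : ℕ → X → ℝ} {L : ℝ}

lemma exists_uniform_abs_sub_le_of_tendsto (hg : ∀ x, Tendsto (fun n => g n x) atTop (𝓝 L)) :
    ∃ d : ℕ → ℝ, Tendsto d atTop (𝓝 0) ∧ ∀ n x, |g n x - L| ≤ d n :=
  ⟨fun n => ‖g n - fun _ => L‖, tendsto_iff_norm_sub_tendsto_zero.1 (tendsto_pi_nhds.2 hg),
    fun n x => norm_le_pi_norm (g n - fun _ => L) x⟩

lemma tendsto_inv_mul_sum_range_apply (hg : ∀ x, Tendsto (fun n => g n x) atTop (𝓝 L))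
    (ω : ℕ → X) :
    Tendsto (fun n : ℕ => (n : ℝ)⁻¹ * ∑ k ∈ range n, g n (ω k)) atTop (𝓝 L) := by
  obtain ⟨d, hd, hgd⟩ := exists_uniform_abs_sub_le_of_tendsto hg
  rw [← tendsto_sub_nhds_zero_iff]
  refine squeeze_zero_norm' ?_ hd
  filter_upwards [eventually_ne_atTop 0] with n hn
  exact abs_inv_mul_sum_sub_le_of_le (card_range n) hn fun k _ => hgd n (ω k)

lemma tendsto_inv_mul_sum_Icc_apply (hg : ∀ x, Tendsto (fun n => g n x) atTop (𝓝 L))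
    (y : ℕ → X) :
    Tendsto (fun n : ℕ => (n : ℝ)⁻¹ * ∑ l ∈ Icc 1 n, g l (y n)) atTop (𝓝 L) := by
  obtain ⟨d, hd, hgd⟩ := exists_uniform_abs_sub_le_of_tendsto hg
  have hcesaro : Tendsto (fun n : ℕ => (n : ℝ)⁻¹ * ∑ l ∈ Icc 1 n, d l) atTop (𝓝 0) := by
    have hshift (n : ℕ) : ∑ l ∈ Icc 1 n, d l = ∑ i ∈ range n, d (i + 1) := by
      rw [range_eq_Ico, sum_Ico_add', ← Ico_add_one_right_eq_Icc]
    simpa only [hshift, Function.comp_def] using (hd.comp (tendsto_add_atTop_nat 1)).cesaro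
  rw [← tendsto_sub_nhds_zero_iff]
  refine squeeze_zero_norm' ?_ hcesaro
  filter_upwards [eventually_ne_atTop 0] with n hn
  exact abs_inv_mul_sum_sub_le (by simp) hn fun l _ => hgd l (y n)

lemma IsLE.tendsto_apply [Nonempty X] {E : (X → ℝ) → ℝ} (hE : IsLE E)
    (hg : ∀ x, Tendsto (fun n => g n x) atTop (𝓝 L)) :
    Tendsto (fun n => E (g n)) atTop (𝓝 L) := by
  obtain ⟨d, hd, hgd⟩ := exists_uniform_abs_sub_le_of_tendsto hg
  rw [← tendsto_sub_nhds_zero_iff]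
  exact squeeze_zero_norm (fun n => hE.abs_sub_le (hgd n)) hd

end Averages

/-- The average gain `A^g(x_{1:n})` of the paper, with `s k` standing for `x_{k+1}`. -/
noncomputable def averageGain {X : Type} (E1 : (X → ℝ) → ℝ) (T : (X → ℝ) → X → ℝ) (g : X → ℝ)
    {n : ℕ} (s : Fin n → X) : ℝ :=
  (n : ℝ)⁻¹ * ∑ k : Fin n,
    (g (s k) - if k.1 = 0 then E1 g else T g (s ⟨k.1 - 1, by omega⟩))

lemma abs_averageGain_le {X : Type} [Fintype X] [Nonempty X] {E1 : (X → ℝ) → ℝ}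
    {T : (X → ℝ) → X → ℝ} (hE1 : IsLE E1) (hT : IsLowerTransition T) (g : X → ℝ) {n : ℕ}
    (s : Fin n → X) : |averageGain E1 T g s| ≤ varnorm g := by
  rcases eq_or_ne n 0 with rfl | hn
  · simpa [averageGain] using varnorm_nonneg g
  have hterm (k : Fin n) :
      |g (s k) - if k.1 = 0 then E1 g else T g (s ⟨k.1 - 1, by omega⟩)| ≤ varnorm g := by
    split_ifs
    · exact hE1.abs_apply_sub_le_varnorm g (s k)
    · exact (hT _).abs_apply_sub_le_varnorm g (s k)
  simpa only [averageGain, sub_zero] using abs_inv_mul_sum_sub_le_of_le (L := 0)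
    (Finset.card_fin n) hn fun k _ => by rw [sub_zero]; exact hterm k

theorem advanced_bounding_general {X : Type} [Fintype X] [Nonempty X]
    (E1 : (X → ℝ) → ℝ) (T : (X → ℝ) → X → ℝ)
    (hE1 : IsLE E1) (hT : ∀ x : X, IsLE (fun h => T h x))
    (Einf : (X → ℝ) → ℝ)
    (hPF : ∀ (h : X → ℝ) (x : X), Tendsto (fun n => (T^[n] h) x) atTop (nhds (Einf h)))
    (r : ℕ)
    (f : X → ℝ) :
    (∀ (l n : ℕ) (s : Fin n → X),
        |(n : ℝ)⁻¹ * ∑ k : Fin n, (T^[l] f (s k) -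
            (if k.1 = 0 then E1 (T^[l] f)
              else T (T^[l] f) (s ⟨k.1 - 1, lt_of_le_of_lt (Nat.sub_le k.1 1) k.isLt⟩)))|
          ≤ varnorm f * coeff (T^[r]) ^ (l / r))
    ∧ (∀ ω : ℕ → X, Tendsto
        (fun n : ℕ => (n : ℝ)⁻¹ * ∑ k ∈ Finset.range n, T^[n] f (ω k))
        atTop (nhds (Einf f)))
    ∧ (∀ ω : ℕ → X, Tendsto
        (fun n : ℕ => (n : ℝ)⁻¹ * ∑ l ∈ Finset.Icc 1 n, T^[l] f (ω (n - 1)))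
        atTop (nhds (Einf f)))
    ∧ Tendsto (fun n : ℕ => (n : ℝ)⁻¹ * ∑ k ∈ Finset.range n, E1 (T^[k] f))
        atTop (nhds (Einf f)) := by
  have hconv : ∀ x, Tendsto (fun n => T^[n] f x) atTop (𝓝 (Einf f)) := hPF f
  refine ⟨fun l n s => ?_, fun ω => ?_, fun ω => ?_, (hE1.tendsto_apply hconv).cesaro⟩
  · exact (abs_averageGain_le hE1 hT (T^[l] f) s).trans
      (IsLowerTransition.varnorm_iterate_le_coeff_pow_div hT r l f)
  · exact tendsto_inv_mul_sum_range_apply hconv ω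
  · exact tendsto_inv_mul_sum_Icc_apply hconv fun n => ω (n - 1)

/-- Advanced bounding lemma: average gains are bounded, and three Cesàro-type limits
converge to the stationary lower expectation. -/
theorem advanced_bounding {X : Type} [Fintype X] [Nonempty X]
    (E1 : (X → ℝ) → ℝ) (T : (X → ℝ) → X → ℝ)
    (hE1 : IsLE E1) (hT : ∀ x : X, IsLE (fun h => T h x))
    (Einf : (X → ℝ) → ℝ)
    (hPF : ∀ (h : X → ℝ) (x : X), Tendsto (fun n => (T^[n] h) x) atTop (nhds (Einf h)))
    (r : ℕ) (hr0 : 0 < r) (hρ : coeff (T^[r]) < 1)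
    (hrmin : ∀ r' : ℕ, 0 < r' → coeff (T^[r']) < 1 → r ≤ r')
    (f : X → ℝ) :
    (∀ (l n : ℕ) (s : Fin n → X),
        |(n : ℝ)⁻¹ * ∑ k : Fin n, (T^[l] f (s k) -
            (if k.1 = 0 then E1 (T^[l] f)
              else T (T^[l] f) (s ⟨k.1 - 1, lt_of_le_of_lt (Nat.sub_le k.1 1) k.isLt⟩)))|
          ≤ varnorm f * coeff (T^[r]) ^ (l / r))
    ∧ (∀ ω : ℕ → X, Tendsto
        (fun n : ℕ => (n : ℝ)⁻¹ * ∑ k ∈ Finset.range n, T^[n] f (ω k))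
        atTop (nhds (Einf f)))
    ∧ (∀ ω : ℕ → X, Tendsto
        (fun n : ℕ => (n : ℝ)⁻¹ * ∑ l ∈ Finset.Icc 1 n, T^[l] f (ω (n - 1)))
        atTop (nhds (Einf f)))
    ∧ Tendsto (fun n : ℕ => (n : ℝ)⁻¹ * ∑ k ∈ Finset.range n, E1 (T^[k] f))
        atTop (nhds (Einf f)) :=
  advanced_bounding_general E1 T hE1 hT Einf hPF r f

end IP
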